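/- arXiv:1402.1990 — 2 statements merged into one kernel-verified Lean document; each statement's English description precedes it below -/
import Mathlib

section
/- (Csiszár-Kullback-Pinsker inequality) For probability measures $\mu, \nu$ on a measurable space, $2\|\mu - \nu\|_{TV}^2 \leq \mathcal H(\mu|\nu)$, where $\|\cdot\|_{TV}$ is the total variation norm. -/
open MeasureTheory Classical

/-- Relative entropy `H(μ|ν) = ∫ log(dμ/dν) dμ` if `μ ≪ ν` (and the
integral is finite), and `+∞` otherwise. -/
noncomputable def relEnt {Ω : Type*} [MeasurableSpace Ω] (μ ν : Measure Ω) : EReal :=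
  if μ ≪ ν ∧ Integrable (llr μ ν) μ then ((∫ x, llr μ ν x ∂μ : ℝ) : EReal) else ⊤

/-- Total variation distance: `sup_A |μ(A) - ν(A)|` over measurable sets. -/
noncomputable def tvDist {Ω : Type*} [MeasurableSpace Ω] (μ ν : Measure Ω) : ℝ :=
  ⨆ A : {A : Set Ω // MeasurableSet A}, |(μ A).toReal - (ν A).toReal|

/-!
Write `g = dμ/dν`, so that `∫ g dν = 1` and `H(μ|ν) = ∫ φ(g) dν` with
`φ(x) = x log x - x + 1` (`klFun`). Since `∫ (g - 1) dν = 0`, every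
`|μ A - ν A| = |∫_A (g - 1) dν|` is at most `½ ∫ |g - 1| dν`. The elementary inequality
`3 (x - 1)² ≤ (2x + 4) φ(x)` for `x ≥ 0` and Cauchy–Schwarz give
`(∫ |g - 1| dν)² ≤ (∫ (2g + 4)/3 dν) (∫ φ(g) dν) = 2 H(μ|ν)`.
-/

open Real Set InformationTheory

lemma monotoneOn_add_one_mul_log_sub_two_mul :
    MonotoneOn (fun x : ℝ ↦ (x + 1) * log x - 2 * (x - 1)) (Ioi 0) := by
  have hderiv (x : ℝ) (hx : 0 < x) :
      HasDerivAt (fun x : ℝ ↦ (x + 1) * log x - 2 * (x - 1)) (log x + x⁻¹ - 1) x := by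
    refine ((((hasDerivAt_id' x).add_const 1).mul (hasDerivAt_log hx.ne')).sub
      (((hasDerivAt_id' x).sub_const 1).const_mul 2)).congr_deriv ?_
    field_simp
    ring
  refine monotoneOn_of_hasDerivWithinAt_nonneg (f' := fun x ↦ log x + x⁻¹ - 1) (convex_Ioi 0)
    (fun x hx ↦ (hderiv x hx).continuousAt.continuousWithinAt) (fun x hx ↦ ?_) fun x hx ↦ ?_
  · rw [interior_Ioi] at hx
    exact (hderiv x hx).hasDerivWithinAt
  · rw [interior_Ioi] at hx
    linarith [one_sub_inv_le_log_of_pos (mem_Ioi.mp hx)]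

lemma hasDerivAt_mul_klFun_sub_three_mul_sq {x : ℝ} (hx : 0 < x) :
    HasDerivAt (fun x ↦ (2 * x + 4) * klFun x - 3 * (x - 1) ^ 2)
      (4 * ((x + 1) * log x - 2 * (x - 1))) x := by
  refine ((((hasDerivAt_id' x).const_mul 2).add_const 4).mul (hasDerivAt_klFun hx.ne')).sub
    ((((hasDerivAt_id' x).sub_const 1).pow 2).const_mul 3) |>.congr_deriv ?_
  rw [klFun_apply]
  ring

lemma three_mul_sq_sub_one_le_klFun {x : ℝ} (hx : 0 ≤ x) :
    3 * (x - 1) ^ 2 ≤ (2 * x + 4) * klFun x := by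
  set F : ℝ → ℝ := fun x ↦ (2 * x + 4) * klFun x - 3 * (x - 1) ^ 2
  set F' : ℝ → ℝ := fun x ↦ 4 * ((x + 1) * log x - 2 * (x - 1))
  have hF_cont : Continuous F := by fun_prop
  have hF_one : F 1 = 0 := by simp [F, klFun_one]
  have hF'_nonpos {y : ℝ} (hy₀ : 0 < y) (hy₁ : y ≤ 1) : F' y ≤ 0 := by
    have := monotoneOn_add_one_mul_log_sub_two_mul hy₀ (mem_Ioi.mpr one_pos) hy₁
    simp only [log_one] at this
    linarith
  have hF'_nonneg {y : ℝ} (hy : 1 ≤ y) : 0 ≤ F' y := by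
    have := monotoneOn_add_one_mul_log_sub_two_mul (mem_Ioi.mpr one_pos)
      (mem_Ioi.mpr (one_pos.trans_le hy)) hy
    simp only [log_one] at this
    linarith
  suffices 0 ≤ F x by simpa [F, sub_nonneg] using this
  rcases le_total x 1 with hx₁ | hx₁
  · have hanti : AntitoneOn F (Icc 0 1) := by
      refine antitoneOn_of_hasDerivWithinAt_nonpos (f' := F') (convex_Icc 0 1)
        hF_cont.continuousOn (fun y hy ↦ ?_) fun y hy ↦ ?_ <;> rw [interior_Icc] at hy
      · exact (hasDerivAt_mul_klFun_sub_three_mul_sq hy.1).hasDerivWithinAt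
      · exact hF'_nonpos hy.1 hy.2.le
    simpa [hF_one] using hanti ⟨hx, hx₁⟩ ⟨zero_le_one, le_rfl⟩ hx₁
  · have hmono : MonotoneOn F (Ici 1) := by
      refine monotoneOn_of_hasDerivWithinAt_nonneg (f' := F') (convex_Ici 1)
        hF_cont.continuousOn (fun y hy ↦ ?_) fun y hy ↦ ?_ <;> rw [interior_Ici] at hy
      · exact (hasDerivAt_mul_klFun_sub_three_mul_sq (one_pos.trans hy)).hasDerivWithinAt
      · exact hF'_nonneg hy.le
    simpa [hF_one] using hmono (mem_Ici.mpr le_rfl) (mem_Ici.mpr hx₁) hx₁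

section RealIntegral

variable {α : Type*} [MeasurableSpace α] {μ : Measure α}

lemma sq_integral_abs_le_integral_mul_integral {f u v : α → ℝ}
    (hu : Integrable u μ) (hv : Integrable v μ)
    (hu₀ : ∀ x, 0 ≤ u x) (hv₀ : ∀ x, 0 ≤ v x)
    (hfuv : ∀ x, f x ^ 2 ≤ u x * v x) :
    (∫ x, |f x| ∂μ) ^ 2 ≤ (∫ x, u x ∂μ) * ∫ x, v x ∂μ := by
  have hf_le x : |f x| ≤ √(u x) * √(v x) := by
    rw [← sqrt_mul (hu₀ x), ← sqrt_sq_eq_abs]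
    exact sqrt_le_sqrt (hfuv x)
  have hsqrt_memLp {w : α → ℝ} (hw : Integrable w μ) (hw₀ : ∀ x, 0 ≤ w x) :
      MemLp (fun x ↦ √(w x)) 2 μ := by
    rw [memLp_two_iff_integrable_sq
      (continuous_sqrt.comp_aestronglyMeasurable hw.aestronglyMeasurable)]
    exact hw.congr (ae_of_all _ fun x ↦ (sq_sqrt (hw₀ x)).symm)
  have hholder := integral_mul_le_Lp_mul_Lq_of_nonneg Real.HolderConjugate.two_two
    (ae_of_all _ fun x ↦ sqrt_nonneg (u x)) (ae_of_all _ fun x ↦ sqrt_nonneg (v x))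
    (by simpa using hsqrt_memLp hu hu₀) (by simpa using hsqrt_memLp hv hv₀)
  simp only [rpow_two, sq_sqrt (hu₀ _), sq_sqrt (hv₀ _), ← sqrt_eq_rpow] at hholder
  have hprod_int : Integrable (fun x ↦ √(u x) * √(v x)) μ :=
    (hsqrt_memLp hu hu₀).integrable_mul (hsqrt_memLp hv hv₀)
  calc (∫ x, |f x| ∂μ) ^ 2
      ≤ (∫ x, √(u x) * √(v x) ∂μ) ^ 2 := by
        refine pow_le_pow_left₀ (integral_nonneg fun x ↦ abs_nonneg _) ?_ 2
        exact integral_mono_of_nonneg (ae_of_all _ fun x ↦ abs_nonneg _) hprod_int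
          (ae_of_all _ hf_le)
    _ ≤ (√(∫ x, u x ∂μ) * √(∫ x, v x ∂μ)) ^ 2 :=
        pow_le_pow_left₀ (integral_nonneg fun x ↦ by positivity) hholder 2
    _ = (∫ x, u x ∂μ) * ∫ x, v x ∂μ := by
        rw [mul_pow, sq_sqrt (integral_nonneg hu₀), sq_sqrt (integral_nonneg hv₀)]

lemma abs_setIntegral_le_half_integral_abs {f : α → ℝ} {s : Set α} (hf : Integrable f μ)
    (hf₀ : ∫ x, f x ∂μ = 0) (hs : MeasurableSet s) :
    |∫ x in s, f x ∂μ| ≤ (∫ x, |f x| ∂μ) / 2 := by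
  have hcompl : ∫ x in sᶜ, f x ∂μ = -∫ x in s, f x ∂μ := by
    linarith [integral_add_compl hs hf]
  have hs_le : |∫ x in s, f x ∂μ| ≤ ∫ x in s, |f x| ∂μ := abs_integral_le_integral_abs
  have hsc_le : |∫ x in sᶜ, f x ∂μ| ≤ ∫ x in sᶜ, |f x| ∂μ :=
    abs_integral_le_integral_abs
  rw [hcompl, abs_neg] at hsc_le
  linarith [integral_add_compl hs hf.abs]

end RealIntegral

section ProbabilityMeasures

variable {Ω : Type*} [MeasurableSpace Ω] {μ ν : Measure Ω}
  [IsProbabilityMeasure μ] [IsProbabilityMeasure ν]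

lemma integral_toReal_rnDeriv_sub_one (hμν : μ ≪ ν) :
    ∫ x, ((μ.rnDeriv ν x).toReal - 1) ∂ν = 0 := by
  rw [integral_sub Measure.integrable_toReal_rnDeriv (integrable_const 1),
    Measure.integral_toReal_rnDeriv hμν]
  simp

lemma tvDist_le_half_integral_abs_rnDeriv_sub_one (hμν : μ ≪ ν) :
    tvDist μ ν ≤ (∫ x, |(μ.rnDeriv ν x).toReal - 1| ∂ν) / 2 := by
  refine ciSup_le fun ⟨A, hA⟩ ↦ ?_
  have hdiff :
      (μ A).toReal - (ν A).toReal = ∫ x in A, ((μ.rnDeriv ν x).toReal - 1) ∂ν := by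
    rw [integral_sub Measure.integrable_toReal_rnDeriv.integrableOn (integrableOn_const
      (measure_ne_top ν A)), Measure.setIntegral_toReal_rnDeriv hμν, setIntegral_const]
    simp [Measure.real]
  rw [hdiff]
  exact abs_setIntegral_le_half_integral_abs
    (Measure.integrable_toReal_rnDeriv.sub (integrable_const 1))
    (integral_toReal_rnDeriv_sub_one hμν) hA

lemma sq_integral_abs_rnDeriv_sub_one_le (hμν : μ ≪ ν) (h_int : Integrable (llr μ ν) μ) :
    (∫ x, |(μ.rnDeriv ν x).toReal - 1| ∂ν) ^ 2 ≤ 2 * ∫ x, llr μ ν x ∂μ := by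
  set g : Ω → ℝ := fun x ↦ (μ.rnDeriv ν x).toReal
  have hg : Integrable g ν := Measure.integrable_toReal_rnDeriv
  have hg₀ x : 0 ≤ g x := ENNReal.toReal_nonneg
  have hweight : ∫ x, (2 * g x + 4) / 3 ∂ν = 2 := by
    rw [integral_div, integral_add (hg.const_mul 2) (integrable_const 4), integral_const_mul,
      Measure.integral_toReal_rnDeriv hμν]
    norm_num
  have hkl : ∫ x, klFun (g x) ∂ν = ∫ x, llr μ ν x ∂μ := by
    simp [g, integral_klFun_rnDeriv hμν h_int]
  calc (∫ x, |g x - 1| ∂ν) ^ 2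
      ≤ (∫ x, (2 * g x + 4) / 3 ∂ν) * ∫ x, klFun (g x) ∂ν := by
        refine sq_integral_abs_le_integral_mul_integral (((hg.const_mul 2).add
          (integrable_const 4)).div_const 3) ((integrable_klFun_rnDeriv_iff hμν).mpr h_int)
          (fun x ↦ by positivity) (fun x ↦ klFun_nonneg (hg₀ x)) fun x ↦ ?_
        linarith [three_mul_sq_sub_one_le_klFun (hg₀ x)]
    _ = 2 * ∫ x, llr μ ν x ∂μ := by rw [hweight, hkl]

lemma two_mul_tvDist_sq_le_integral_llr (hμν : μ ≪ ν) (h_int : Integrable (llr μ ν) μ) :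
    2 * tvDist μ ν ^ 2 ≤ ∫ x, llr μ ν x ∂μ := by
  have htv₀ : 0 ≤ tvDist μ ν := Real.iSup_nonneg fun _ ↦ abs_nonneg _
  have htv := tvDist_le_half_integral_abs_rnDeriv_sub_one hμν
  have hL1 := sq_integral_abs_rnDeriv_sub_one_le hμν h_int
  nlinarith

end ProbabilityMeasures

/-- Csiszár–Kullback–Pinsker: for probability measures,
`2 ‖μ - ν‖_TV² ≤ H(μ|ν)`. -/
theorem stmt3 {Ω : Type*} [MeasurableSpace Ω] (μ ν : Measure Ω)
    [IsProbabilityMeasure μ] [IsProbabilityMeasure ν] :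
    ((2 * tvDist μ ν ^ 2 : ℝ) : EReal) ≤ relEnt μ ν := by
  rw [relEnt]
  split_ifs with h
  · exact_mod_cast two_mul_tvDist_sq_le_integral_llr h.1 h.2
  · exact le_top
end

section
/- Let $S_n$ be the number of heads in $n$ independent fair coin tosses. Then for every $a \in [1/2, 1)$, $\lim_{n\to\infty} \frac1n \log \mathbb{P}(S_n \geq an) = -I(a)$, where $I(a) = a\log a + (1-a)\log(1-a) + \log 2$. -/
open Real Filter


noncomputable def ls (m : ℕ) : ℝ := Real.log (Stirling.stirlingSeq m)

lemma log_factorial_eq (m : ℕ) (hm : 1 ≤ m) :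
    Real.log (m.factorial : ℝ) = ls m + 1/2 * Real.log (2*m) + (m:ℝ) * (Real.log m - 1) := by
  have hm' : (0:ℝ) < m := by exact_mod_cast hm
  have h := Stirling.log_stirlingSeq_formula m
  have hlog : Real.log ((m:ℝ) / Real.exp 1) = Real.log m - 1 := by
    rw [Real.log_div (by positivity) (Real.exp_ne_zero 1), Real.log_exp]
  rw [hlog] at h
  unfold ls
  linarith

lemma log_choose (n k : ℕ) (hk : k ≤ n) :
    Real.log (n.choose k : ℝ) =
      Real.log (n.factorial : ℝ) - Real.log (k.factorial : ℝ) - Real.log ((n-k).factorial : ℝ) := by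
  have h := Nat.choose_mul_factorial_mul_factorial hk
  have h' : (n.choose k : ℝ) * (k.factorial : ℝ) * ((n-k).factorial : ℝ) = (n.factorial : ℝ) := by
    exact_mod_cast congrArg (Nat.cast : ℕ → ℝ) h
  have h1 : (0:ℝ) < n.choose k := by exact_mod_cast Nat.choose_pos hk
  have h2 : (0:ℝ) < k.factorial := by exact_mod_cast k.factorial_pos
  rw [← h', Real.log_mul (by positivity) (by positivity), Real.log_mul (by positivity) (by positivity)]
  ring

lemma alg (n k : ℕ) (hk1 : 1 ≤ k) (hkn : k < n) :
    (1/(n:ℝ)) * Real.log (n.choose k : ℝ) =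
      (ls n - ls k - ls (n-k))/n
      + (Real.log (2*n) - Real.log (2*k) - Real.log (2*(n-k:ℕ)))/(2*n)
      - (((k:ℝ)/n) * Real.log ((k:ℝ)/n) + (1 - (k:ℝ)/n) * Real.log (1 - (k:ℝ)/n)) := by
  have hn1 : 1 ≤ n := le_of_lt (lt_of_le_of_lt hk1 hkn)
  have hm1 : 1 ≤ n - k := by omega
  have hN : (0:ℝ) < n := by exact_mod_cast lt_of_le_of_lt (Nat.zero_le _) hkn
  have hK : (0:ℝ) < k := by exact_mod_cast hk1
  have hM : (0:ℝ) < ((n-k:ℕ):ℝ) := by exact_mod_cast hm1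
  have hcast : ((n-k:ℕ):ℝ) = (n:ℝ) - k := by
    push_cast [Nat.cast_sub (le_of_lt hkn)]; ring
  rw [log_choose n k (le_of_lt hkn), log_factorial_eq n hn1, log_factorial_eq k hk1,
    log_factorial_eq (n-k) hm1]
  have e1 : Real.log ((k:ℝ)/n) = Real.log k - Real.log n := Real.log_div (ne_of_gt hK) (ne_of_gt hN)
  have e2 : (1 : ℝ) - (k:ℝ)/n = ((n-k:ℕ):ℝ)/n := by rw [hcast]; field_simp
  have e3 : Real.log (((n-k:ℕ):ℝ)/n) = Real.log ((n-k:ℕ):ℝ) - Real.log n :=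
    Real.log_div (ne_of_gt hM) (ne_of_gt hN)
  rw [e1, e2, e3, hcast]
  field_simp
  ring

lemma hls : Tendsto ls atTop (nhds (Real.log (Real.sqrt Real.pi))) := by
  have : Real.sqrt Real.pi ≠ 0 := by positivity
  exact ((Real.continuousAt_log this).tendsto.comp Stirling.tendsto_stirlingSeq_sqrt_pi)

lemma tendsto_log_choose (a : ℝ) (ha0 : 0 < a) (ha1 : a < 1) (k : ℕ → ℕ)
    (hk : ∀ n, k n ≤ n) (hx : Tendsto (fun n : ℕ => (k n : ℝ)/n) atTop (nhds a)) :
    Tendsto (fun n : ℕ => (1/(n:ℝ)) * Real.log ((n.choose (k n) : ℝ))) atTop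
      (nhds (-(a * Real.log a + (1-a) * Real.log (1-a)))) := by
  -- eventual lower bounds on x n
  have hx1 : ∀ᶠ n in atTop, a/2 < (k n : ℝ)/n := hx.eventually (eventually_gt_nhds (by linarith))
  have hx2 : ∀ᶠ n in atTop, (k n : ℝ)/n < (1+a)/2 := hx.eventually (eventually_lt_nhds (by linarith))
  -- k n → ∞
  have hkR : Tendsto (fun n => (k n : ℝ)) atTop atTop := by
    have hev : (fun n : ℕ => (a/2) * n) ≤ᶠ[atTop] fun n : ℕ => (k n : ℝ) := by
      filter_upwards [hx1, eventually_gt_atTop 0] with n h1 hn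
      have hn' : (0:ℝ) < n := by exact_mod_cast hn
      rw [lt_div_iff₀ hn'] at h1
      nlinarith
    exact tendsto_atTop_mono' atTop hev
      (Tendsto.const_mul_atTop (by linarith) tendsto_natCast_atTop_atTop)
  have hkN : Tendsto k atTop atTop := tendsto_natCast_atTop_iff.mp hkR
  -- n - k n → ∞
  have hmR : Tendsto (fun n : ℕ => ((n - k n : ℕ) : ℝ)) atTop atTop := by
    have hev : (fun n : ℕ => ((1-a)/2) * n) ≤ᶠ[atTop] fun n : ℕ => ((n - k n : ℕ) : ℝ) := by
      filter_upwards [hx2, eventually_gt_atTop 0] with n h2 hn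
      have hn' : (0:ℝ) < n := by exact_mod_cast hn
      rw [div_lt_iff₀ hn'] at h2
      rw [Nat.cast_sub (hk n)]
      nlinarith
    exact tendsto_atTop_mono' atTop hev
      (Tendsto.const_mul_atTop (by linarith) tendsto_natCast_atTop_atTop)
  have hmN : Tendsto (fun n : ℕ => n - k n) atTop atTop := tendsto_natCast_atTop_iff.mp hmR
  -- eventual regime
  have hreg : ∀ᶠ n : ℕ in atTop, 1 ≤ k n ∧ k n < n := by
    filter_upwards [hkN.eventually_ge_atTop 1, hmN.eventually_ge_atTop 1] with n h1 h2
    omega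
  -- T1 : stirling error
  have T1 : Tendsto (fun n : ℕ => (ls n - ls (k n) - ls (n - k n))/(n:ℝ)) atTop (nhds 0) := by
    have h1 : Tendsto (fun n : ℕ => ls n - ls (k n) - ls (n - k n)) atTop
        (nhds (Real.log (Real.sqrt Real.pi) - Real.log (Real.sqrt Real.pi)
          - Real.log (Real.sqrt Real.pi))) :=
      ((hls.comp tendsto_id).sub (hls.comp hkN)).sub (hls.comp hmN)
    simpa using h1.div_atTop tendsto_natCast_atTop_atTop
  -- T2 : log error
  have hlogdiv : Tendsto (fun x : ℝ => Real.log x / x) atTop (nhds 0) :=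
    Real.isLittleO_log_id_atTop.tendsto_div_nhds_zero
  have h2n : Tendsto (fun n : ℕ => 2*(n:ℝ)) atTop atTop :=
    Tendsto.const_mul_atTop two_pos tendsto_natCast_atTop_atTop
  have T2 : Tendsto (fun n : ℕ =>
      (Real.log (2*n) - Real.log (2*(k n)) - Real.log (2*((n - k n : ℕ):ℝ)))/(2*(n:ℝ)))
      atTop (nhds 0) := by
    apply squeeze_zero_norm' (a := fun n : ℕ => 3 * (Real.log (2*(n:ℝ)) / (2*(n:ℝ))))
    · filter_upwards [hreg, eventually_gt_atTop 0] with n ⟨h1, h2⟩ hn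
      have hn' : (0:ℝ) < n := by exact_mod_cast hn
      have hk' : (1:ℝ) ≤ k n := by exact_mod_cast h1
      have hm' : (1:ℝ) ≤ ((n - k n : ℕ):ℝ) := by
        have : 1 ≤ n - k n := by omega
        exact_mod_cast this
      have hkn' : (k n : ℝ) ≤ n := by exact_mod_cast hk n
      have hmn' : ((n - k n : ℕ):ℝ) ≤ n := by
        have : n - k n ≤ n := by omega
        exact_mod_cast this
      have l0 : (0:ℝ) ≤ Real.log (2*n) := Real.log_nonneg (by linarith)
      have lk0 : (0:ℝ) ≤ Real.log (2*(k n)) := Real.log_nonneg (by linarith)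
      have lm0 : (0:ℝ) ≤ Real.log (2*((n - k n : ℕ):ℝ)) := Real.log_nonneg (by linarith)
      have lk1 : Real.log (2*(k n):ℝ) ≤ Real.log (2*n) :=
        Real.log_le_log (by linarith) (by linarith)
      have lm1 : Real.log (2*((n - k n : ℕ):ℝ)) ≤ Real.log (2*n) :=
        Real.log_le_log (by linarith) (by linarith)
      rw [Real.norm_eq_abs, abs_div, abs_of_pos (by linarith : (0:ℝ) < 2*(n:ℝ))]
      rw [div_le_iff₀ (by linarith : (0:ℝ) < 2*(n:ℝ))]
      have : |Real.log (2*n) - Real.log (2*(k n)) - Real.log (2*((n - k n : ℕ):ℝ))|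
          ≤ 3 * Real.log (2*n) := by
        rw [abs_le]; constructor <;> nlinarith
      calc |Real.log (2*↑n) - Real.log (2*↑(k n)) - Real.log (2*((n - k n : ℕ):ℝ))|
          ≤ 3 * Real.log (2*n) := this
        _ = 3 * (Real.log (2*(n:ℝ)) / (2*(n:ℝ))) * (2*(n:ℝ)) := by field_simp
    · simpa using (hlogdiv.comp h2n).const_mul 3
  -- T3 : entropy term
  have hlogx : Tendsto (fun n : ℕ => Real.log ((k n : ℝ)/n)) atTop (nhds (Real.log a)) :=
    (Real.continuousAt_log ha0.ne').tendsto.comp hx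
  have hx' : Tendsto (fun n : ℕ => 1 - (k n : ℝ)/n) atTop (nhds (1 - a)) :=
    tendsto_const_nhds.sub hx
  have hlogx' : Tendsto (fun n : ℕ => Real.log (1 - (k n : ℝ)/n)) atTop
      (nhds (Real.log (1-a))) :=
    (Real.continuousAt_log (by linarith : (1:ℝ) - a ≠ 0)).tendsto.comp hx'
  have T3 : Tendsto (fun n : ℕ =>
      ((k n : ℝ)/n) * Real.log ((k n : ℝ)/n) + (1 - (k n : ℝ)/n) * Real.log (1 - (k n : ℝ)/n))
      atTop (nhds (a * Real.log a + (1-a) * Real.log (1-a))) :=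
    (hx.mul hlogx).add (hx'.mul hlogx')
  have total := (T1.add T2).sub T3
  rw [zero_add, zero_sub] at total
  apply total.congr'
  filter_upwards [hreg] with n ⟨h1, h2⟩
  rw [alg n (k n) h1 h2]


lemma choose_mono_right {n j m : ℕ} (h : j ≤ m) (h2 : 2*m ≤ n) : n.choose j ≤ n.choose m := by
  induction h using Nat.decreasingInduction with
  | self => exact le_refl _
  | of_succ k hk ih =>
      exact le_trans (Nat.choose_le_succ_of_lt_half_left (by omega)) ih

lemma choose_anti {n k0 k : ℕ} (h : k0 ≤ k) (hk : k ≤ n) (h2 : n ≤ 2*k0) :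
    n.choose k ≤ n.choose k0 := by
  rw [← Nat.choose_symm hk, ← Nat.choose_symm (le_trans h hk)]
  exact choose_mono_right (by omega) (by omega)

/-- for `S_n` the number of heads in `n` fair coin tosses
(`ℙ(S_n ≥ a n) = 2⁻ⁿ ∑_{k ≥ a n} (n choose k)`), for every `a ∈ [1/2, 1)`,
`(1/n) log ℙ(S_n ≥ a n) → -I(a)` where
`I(a) = a log a + (1-a) log (1-a) + log 2`. -/
theorem stmt12 (a : ℝ) (ha : a ∈ Set.Ico (1/2 : ℝ) 1) :
    Tendsto
      (fun n : ℕ =>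
        (1 / (n : ℝ)) *
          Real.log
            ((∑ k ∈ (Finset.range (n + 1)).filter (fun k : ℕ => a * (n : ℝ) ≤ (k : ℝ)),
                (n.choose k : ℝ)) / 2 ^ n))
      atTop
      (nhds (-(a * log a + (1 - a) * log (1 - a) + log 2))) := by
  obtain ⟨ha0, ha1⟩ := ha
  have ha0' : (0:ℝ) < a := lt_of_lt_of_le (by norm_num) ha0
  set S : ℕ → ℝ := fun n =>
    ∑ k ∈ (Finset.range (n + 1)).filter (fun k : ℕ => a * (n : ℝ) ≤ (k : ℝ)), (n.choose k : ℝ)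
    with hS
  set k0 : ℕ → ℕ := fun n => ⌈a * n⌉₊ with hk0
  have hank : ∀ n : ℕ, (0:ℝ) ≤ a * n := fun n => by positivity
  have hk0le : ∀ n : ℕ, k0 n ≤ n := by
    intro n
    apply Nat.ceil_le.mpr
    have : (0:ℝ) ≤ n := Nat.cast_nonneg n
    nlinarith
  have hk0mem : ∀ n : ℕ, k0 n ∈ (Finset.range (n + 1)).filter (fun k : ℕ => a * (n : ℝ) ≤ (k : ℝ)) := by
    intro n
    simp only [Finset.mem_filter, Finset.mem_range]
    exact ⟨Nat.lt_succ_of_le (hk0le n), Nat.le_ceil _⟩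
  have h2k0 : ∀ n : ℕ, n ≤ 2 * k0 n := by
    intro n
    have h1 : (n:ℝ) ≤ 2 * (k0 n : ℝ) := by
      have := Nat.le_ceil (a * n)
      have : a * n ≤ (k0 n : ℝ) := this
      nlinarith [(Nat.cast_nonneg n : (0:ℝ) ≤ n)]
    exact_mod_cast h1
  have hpos : ∀ n : ℕ, (0:ℝ) < (n.choose (k0 n) : ℝ) := fun n => by
    exact_mod_cast Nat.choose_pos (hk0le n)
  have hSlow : ∀ n : ℕ, (n.choose (k0 n) : ℝ) ≤ S n := by
    intro n
    exact Finset.single_le_sum (f := fun k : ℕ => (n.choose k : ℝ))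
      (fun i _ => by positivity) (hk0mem n)
  have hSup : ∀ n : ℕ, S n ≤ (n+1 : ℝ) * (n.choose (k0 n) : ℝ) := by
    intro n
    calc S n ≤ ((Finset.range (n + 1)).filter (fun k : ℕ => a * (n : ℝ) ≤ (k : ℝ))).card
          • (n.choose (k0 n) : ℝ) := by
          apply Finset.sum_le_card_nsmul
          intro k hkmem
          simp only [Finset.mem_filter, Finset.mem_range] at hkmem
          have hle : k0 n ≤ k := Nat.ceil_le.mpr hkmem.2
          exact_mod_cast choose_anti hle (Nat.lt_succ_iff.mp hkmem.1) (h2k0 n)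
      _ ≤ (n+1 : ℝ) * (n.choose (k0 n) : ℝ) := by
          rw [nsmul_eq_mul]
          apply mul_le_mul_of_nonneg_right _ (le_of_lt (hpos n))
          have := Finset.card_filter_le (Finset.range (n+1)) (fun k : ℕ => a * (n : ℝ) ≤ (k : ℝ))
          rw [Finset.card_range] at this
          exact_mod_cast this
  have hSpos : ∀ n : ℕ, (0:ℝ) < S n := fun n => lt_of_lt_of_le (hpos n) (hSlow n)
  -- k0 n / n → a
  have hx : Tendsto (fun n : ℕ => (k0 n : ℝ)/n) atTop (nhds a) := by
    have hup : Tendsto (fun n : ℕ => a + 1/(n:ℝ)) atTop (nhds a) := by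
      simpa using (tendsto_const_nhds (x := a) (f := atTop (α := ℕ))).add
        tendsto_one_div_atTop_nhds_zero_nat
    apply tendsto_of_tendsto_of_tendsto_of_le_of_le' tendsto_const_nhds hup
    · filter_upwards [eventually_gt_atTop 0] with n hn
      have hn' : (0:ℝ) < n := by exact_mod_cast hn
      rw [le_div_iff₀ hn']
      exact Nat.le_ceil _
    · filter_upwards [eventually_gt_atTop 0] with n hn
      have hn' : (0:ℝ) < n := by exact_mod_cast hn
      rw [div_le_iff₀ hn']
      have hlt := Nat.ceil_lt_add_one (hank n)
      calc (k0 n : ℝ) ≤ a * n + 1 := le_of_lt hlt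
        _ = (a + 1/n) * n := by field_simp
  set L : ℝ := -(a * Real.log a + (1-a) * Real.log (1-a)) with hL
  have hmain : Tendsto (fun n : ℕ => (1/(n:ℝ)) * Real.log ((n.choose (k0 n) : ℝ))) atTop (nhds L) :=
    tendsto_log_choose a ha0' ha1 k0 hk0le hx
  -- log(n+1)/n → 0
  have hlog1 : Tendsto (fun n : ℕ => (1/(n:ℝ)) * Real.log ((n:ℝ)+1)) atTop (nhds 0) := by
    have h1 : Tendsto (fun x : ℝ => Real.log x / x) atTop (nhds 0) :=
      Real.isLittleO_log_id_atTop.tendsto_div_nhds_zero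
    have h2 : Tendsto (fun n : ℕ => ((n:ℝ)+1)) atTop atTop :=
      tendsto_atTop_add_const_right atTop 1 tendsto_natCast_atTop_atTop
    have h3 := h1.comp h2
    have h4 : Tendsto (fun n : ℕ => ((n:ℝ)+1)/n) atTop (nhds 1) := by
      have : Tendsto (fun n : ℕ => 1 + 1/(n:ℝ)) atTop (nhds 1) := by
        simpa using (tendsto_const_nhds (x := (1:ℝ)) (f := atTop (α := ℕ))).add
          tendsto_one_div_atTop_nhds_zero_nat
      apply this.congr'
      filter_upwards [eventually_gt_atTop 0] with n hn
      have hn' : (0:ℝ) < n := by exact_mod_cast hn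
      field_simp
    have h5 := h3.mul h4
    rw [zero_mul] at h5
    apply h5.congr'
    filter_upwards [eventually_gt_atTop 0] with n hn
    have hn' : (0:ℝ) < n := by exact_mod_cast hn
    have hn1 : (0:ℝ) < (n:ℝ)+1 := by linarith
    simp only [Function.comp]
    field_simp
  -- squeeze for (1/n) log S
  have hmid : Tendsto (fun n : ℕ => (1/(n:ℝ)) * Real.log (S n)) atTop (nhds L) := by
    have hupper : Tendsto (fun n : ℕ => (1/(n:ℝ)) * Real.log ((n:ℝ)+1)
        + (1/(n:ℝ)) * Real.log ((n.choose (k0 n) : ℝ))) atTop (nhds (0 + L)) := hlog1.add hmain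
    rw [zero_add] at hupper
    apply tendsto_of_tendsto_of_tendsto_of_le_of_le' hmain hupper
    · filter_upwards [eventually_gt_atTop 0] with n hn
      have hn' : (0:ℝ) < n := by exact_mod_cast hn
      apply mul_le_mul_of_nonneg_left _ (by positivity)
      exact Real.log_le_log (hpos n) (hSlow n)
    · filter_upwards [eventually_gt_atTop 0] with n hn
      have hn' : (0:ℝ) < n := by exact_mod_cast hn
      have hstep : Real.log (S n) ≤ Real.log ((n:ℝ)+1) + Real.log ((n.choose (k0 n) : ℝ)) := by
        rw [← Real.log_mul (by positivity) (ne_of_gt (hpos n))]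
        exact Real.log_le_log (hSpos n) (hSup n)
      calc (1/(n:ℝ)) * Real.log (S n) ≤ (1/(n:ℝ)) * (Real.log ((n:ℝ)+1) + Real.log ((n.choose (k0 n) : ℝ))) :=
            mul_le_mul_of_nonneg_left hstep (by positivity)
        _ = (1/(n:ℝ)) * Real.log ((n:ℝ)+1) + (1/(n:ℝ)) * Real.log ((n.choose (k0 n) : ℝ)) := by ring
  -- conclude
  have hfin := hmid.sub (tendsto_const_nhds (x := Real.log 2) (f := atTop (α := ℕ)))
  have hval : -(a * Real.log a + (1 - a) * Real.log (1 - a) + Real.log 2) = L - Real.log 2 := by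
    rw [hL]; ring
  rw [hval]
  apply hfin.congr'
  filter_upwards [eventually_gt_atTop 0] with n hn
  have hn' : (0:ℝ) < n := by exact_mod_cast hn
  have h2n : (0:ℝ) < (2:ℝ)^n := by positivity
  rw [Real.log_div (ne_of_gt (hSpos n)) (ne_of_gt h2n), Real.log_pow]
  field_simp
end
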